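/- arXiv:2310.14361 — 3 statements merged into one kernel-verified Lean document; each statement's English description precedes it below -/
import Mathlib

section
/- Let 0 ≤ k ≤ n be integers and let ξ be a primitive (n+1)-th root of unity in ℂ. Then the Gaussian binomial coefficient evaluated at ξ satisfies binom(n,k)_ξ = (-1)^k · ξ^(-k(k+1)/2). -/
/-! Since `ξ ^ (n + 1) = 1`, each numerator factor satisfies
`(1 - ξ ^ (n - i)) * ξ ^ (i + 1) = -(1 - ξ ^ (i + 1))`, so the numerator times
`ξ ^ (1 + 2 + ⋯ + k)` is `(-1) ^ k` times the denominator, which does not vanish for `k ≤ n`. -/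

open Finset

theorem sum_range_add_one_eq_triangle (k : ℕ) : ∑ i ∈ range k, (i + 1) = k * (k + 1) / 2 := by
  have h := sum_range_id (k + 1)
  rw [sum_range_succ'] at h
  simpa [Nat.mul_comm] using h

theorem one_sub_pow_mul_pow_of_pow_add_eq_one {R : Type*} [CommRing R] {ξ : R} {a b : ℕ}
    (h : ξ ^ (a + b) = 1) : (1 - ξ ^ a) * ξ ^ b = -(1 - ξ ^ b) := by
  rw [pow_add] at h
  linear_combination -h

theorem prod_one_sub_pow_mul_pow_triangle {R : Type*} [CommRing R] {ξ : R} {n k : ℕ}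
    (hξ : ξ ^ (n + 1) = 1) (hk : k ≤ n + 1) :
    (∏ i ∈ range k, (1 - ξ ^ (n - i))) * ξ ^ (k * (k + 1) / 2)
      = (-1) ^ k * ∏ i ∈ range k, (1 - ξ ^ (i + 1)) := by
  rw [← sum_range_add_one_eq_triangle, ← prod_pow_eq_pow_sum, ← prod_mul_distrib,
    show (-1 : R) ^ k = ∏ _i ∈ range k, (-1) by simp, ← prod_mul_distrib]
  refine prod_congr rfl fun i hi => ?_
  have hsum : n - i + (i + 1) = n + 1 := by
    have := mem_range.mp hi
    omega
  rw [one_sub_pow_mul_pow_of_pow_add_eq_one (hsum ▸ hξ), neg_one_mul]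

theorem IsPrimitiveRoot.prod_one_sub_pow_ne_zero {R : Type*} [CommRing R] [IsDomain R] {ξ : R}
    {n k : ℕ} (hξ : IsPrimitiveRoot ξ (n + 1)) (hk : k ≤ n) :
    ∏ i ∈ range k, (1 - ξ ^ (i + 1)) ≠ 0 :=
  prod_ne_zero_iff.mpr fun i hi =>
    sub_ne_zero.mpr (hξ.pow_ne_one_of_pos_of_lt i.succ_ne_zero (by have := mem_range.mp hi; omega)).symm

theorem IsPrimitiveRoot.prod_one_sub_pow_div_prod_one_sub_pow {K : Type*} [Field K] {ξ : K}
    {n k : ℕ} (hξ : IsPrimitiveRoot ξ (n + 1)) (hk : k ≤ n) :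
    (∏ i ∈ range k, (1 - ξ ^ (n - i))) / (∏ i ∈ range k, (1 - ξ ^ (i + 1)))
      = (-1) ^ k * ξ ^ (-((k * (k + 1) / 2 : ℕ) : ℤ)) := by
  have hξ0 : ξ ≠ 0 := hξ.ne_zero n.succ_ne_zero
  rw [zpow_neg, zpow_natCast, div_eq_iff (hξ.prod_one_sub_pow_ne_zero hk), mul_right_comm,
    ← prod_one_sub_pow_mul_pow_triangle hξ.pow_eq_one (by omega),
    mul_inv_cancel_right₀ (pow_ne_zero _ hξ0)]

/-- The Gaussian binomial coefficient `binom(n,k)_q`, evaluated at `q = ξ`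
a primitive `(n+1)`-th root of unity in `ℂ`, equals `(-1)^k · ξ^(-k(k+1)/2)`. -/
theorem gauss_binom_at_primitive_root (n k : ℕ) (hk : k ≤ n) (ξ : ℂ)
    (hξ : IsPrimitiveRoot ξ (n + 1)) :
    (∏ i ∈ Finset.range k, (1 - ξ ^ (n - i))) / (∏ i ∈ Finset.range k, (1 - ξ ^ (i + 1)))
      = (-1) ^ k * ξ ^ (-((k * (k + 1) / 2 : ℕ) : ℤ)) :=
  hξ.prod_one_sub_pow_div_prod_one_sub_pow hk
end

section
/- Fix n ≥ 0 and a nonempty subset I⁺ ⊆ ℤ/(n+1)ℤ of labels, with boxes of ℕ×ℕ labeled by (i-j) mod (n+1). For every partition λ there exists a unique smallest I⁺-generated partition π(λ) containing λ; i.e. π(λ) is I⁺-generated, contains λ, and is contained in every I⁺-generated partition containing λ. -/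
/-- A box `b ∉ μ` is addable to the Young diagram `μ` if adjoining it again yields a
Young diagram. -/
def Addable (μ : YoungDiagram) (b : ℕ × ℕ) : Prop :=
  b ∉ μ.cells ∧ IsLowerSet (insert b (μ.cells : Set (ℕ × ℕ)))

/-- The diagonal label of a box `(i,j)`: the residue `(i - j) mod (n+1)`. -/
def boxLabel (n : ℕ) (b : ℕ × ℕ) : ZMod (n + 1) :=
  ((b.1 : ℤ) - (b.2 : ℤ) : ℤ)

/-- `μ` is `I⁺`-generated if every addable box of `μ` has label in `I⁺`. -/
def IsGenerated (n : ℕ) (Iplus : Set (ZMod (n + 1))) (μ : YoungDiagram) : Prop :=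
  ∀ b : ℕ × ℕ, Addable μ b → boxLabel n b ∈ Iplus

/-!
The `I⁺`-generated diagrams containing `λ` are closed under intersection: a box addable to
`μ ⊓ ν` but missing from `μ` is already addable to `μ`. Since Young diagrams are finite, a
minimal such diagram is therefore the least one. One exists because a rectangle with `k` rows
and `m` columns has only the addable boxes `(k, 0)` and `(0, m)`, of labels `k` and `-m`, and
both can be made equal to a chosen `a ∈ I⁺` with `k`, `m` as large as needed.
-/

namespace Addable

variable {μ ν : YoungDiagram} {b : ℕ × ℕ}

lemma mem_of_lt (h : Addable μ b) {c : ℕ × ℕ} (hc : c < b) : c ∈ μ := by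
  rcases h.2 hc.le (Set.mem_insert b _) with rfl | hc'
  · exact absurd hc (lt_irrefl c)
  · exact hc'

lemma of_le (h : Addable μ b) (hle : μ ≤ ν) (hb : b ∉ ν) : Addable ν b := by
  refine ⟨hb, fun x y hyx hy ↦ ?_⟩
  rcases hy with rfl | hy
  · rcases hyx.eq_or_lt with rfl | hxy
    · exact Set.mem_insert _ _
    · exact Set.mem_insert_of_mem _ (hle (h.mem_of_lt hxy))
  · exact Set.mem_insert_of_mem _ (ν.isLowerSet hyx hy)

end Addable

lemma IsGenerated.inf {n : ℕ} {Iplus : Set (ZMod (n + 1))} {μ ν : YoungDiagram}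
    (hμ : IsGenerated n Iplus μ) (hν : IsGenerated n Iplus ν) :
    IsGenerated n Iplus (μ ⊓ ν) := by
  intro b hb
  by_cases hbμ : b ∈ μ
  · exact hν b (hb.of_le inf_le_right fun hbν ↦ hb.1 (YoungDiagram.mem_inf.mpr ⟨hbμ, hbν⟩))
  · exact hμ b (hb.of_le inf_le_left hbμ)

instance YoungDiagram.instWellFoundedLT : WellFoundedLT YoungDiagram :=
  StrictMono.wellFoundedLT (f := YoungDiagram.cells) fun _ _ h ↦
    YoungDiagram.cells_ssubset_iff.mpr h

def YoungDiagram.rectangle (k m : ℕ) : YoungDiagram where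
  cells := Finset.range k ×ˢ Finset.range m
  isLowerSet := by
    intro x y hyx hx
    simp only [Finset.coe_product, Finset.coe_range, Set.mem_prod, Set.mem_Iio] at hx ⊢
    exact ⟨hyx.1.trans_lt hx.1, hyx.2.trans_lt hx.2⟩

namespace YoungDiagram

lemma mem_rectangle {k m : ℕ} {c : ℕ × ℕ} : c ∈ rectangle k m ↔ c.1 < k ∧ c.2 < m := by
  simp [← mem_cells, rectangle]

lemma le_rectangle (μ : YoungDiagram) : μ ≤ rectangle (μ.colLen 0) (μ.rowLen 0) := by
  rintro ⟨i, j⟩ hc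
  refine mem_rectangle.mpr ⟨?_, ?_⟩
  · exact (mem_iff_lt_colLen.mp hc).trans_le (μ.colLen_anti 0 j j.zero_le)
  · exact (mem_iff_lt_rowLen.mp hc).trans_le (μ.rowLen_anti 0 i i.zero_le)

lemma rectangle_mono {k k' m m' : ℕ} (hk : k ≤ k') (hm : m ≤ m') :
    rectangle k m ≤ rectangle k' m' := fun _ hc ↦
  mem_rectangle.mpr ⟨(mem_rectangle.mp hc).1.trans_le hk, (mem_rectangle.mp hc).2.trans_le hm⟩

lemma eq_of_addable_rectangle {k m : ℕ} {b : ℕ × ℕ} (h : Addable (rectangle k m) b) :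
    b = (k, 0) ∨ b = (0, m) := by
  obtain ⟨i, j⟩ := b
  have hb : ¬(i < k ∧ j < m) := fun hb ↦ h.1 (mem_rectangle.mpr hb)
  have below : 0 < i → i - 1 < k ∧ j < m := fun hi ↦
    mem_rectangle.mp (h.mem_of_lt (Prod.mk_lt_mk_of_lt_of_le (by omega) le_rfl))
  have left : 0 < j → i < k ∧ j - 1 < m := fun hj ↦
    mem_rectangle.mp (h.mem_of_lt (Prod.mk_lt_mk_of_le_of_lt le_rfl (by omega)))
  simp only [Prod.mk.injEq]
  rcases Nat.eq_zero_or_pos i with rfl | hi <;> rcases Nat.eq_zero_or_pos j with rfl | hj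
  · omega
  · have := left hj; omega
  · have := below hi; omega
  · have := below hi; have := left hj; omega

end YoungDiagram

lemma ZMod.exists_ge_natCast_eq {n : ℕ} (x : ZMod (n + 1)) (L : ℕ) :
    ∃ k : ℕ, L ≤ k ∧ (k : ZMod (n + 1)) = x :=
  ⟨x.val + (n + 1) * L, by nlinarith, by simp⟩

lemma isGenerated_rectangle {n : ℕ} {Iplus : Set (ZMod (n + 1))} {a : ZMod (n + 1)}
    (ha : a ∈ Iplus) {k m : ℕ} (hk : (k : ZMod (n + 1)) = a) (hm : (m : ZMod (n + 1)) = -a) :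
    IsGenerated n Iplus (YoungDiagram.rectangle k m) := by
  intro b hb
  rcases YoungDiagram.eq_of_addable_rectangle hb with rfl | rfl
  · simpa [boxLabel, hk] using ha
  · simpa [boxLabel, hm] using ha

lemma exists_isGenerated_le {n : ℕ} {Iplus : Set (ZMod (n + 1))} (hne : Iplus.Nonempty)
    (lam : YoungDiagram) : ∃ μ, IsGenerated n Iplus μ ∧ lam ≤ μ := by
  obtain ⟨a, ha⟩ := hne
  obtain ⟨k, hk, hka⟩ := ZMod.exists_ge_natCast_eq a (lam.colLen 0)
  obtain ⟨m, hm, hma⟩ := ZMod.exists_ge_natCast_eq (-a) (lam.rowLen 0)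
  exact ⟨_, isGenerated_rectangle ha hka hma,
    lam.le_rectangle.trans (YoungDiagram.rectangle_mono hk hm)⟩

/-- For every partition `λ` there is a unique smallest `I⁺`-generated partition
containing `λ` (for `I⁺` a nonempty set of labels). -/
theorem exists_unique_smallest_generated (n : ℕ) (Iplus : Set (ZMod (n + 1)))
    (hne : Iplus.Nonempty) (lam : YoungDiagram) :
    ∃! π : YoungDiagram, IsGenerated n Iplus π ∧ lam ≤ π ∧
      ∀ μ : YoungDiagram, IsGenerated n Iplus μ → lam ≤ μ → π ≤ μ := by
  set S := {μ | IsGenerated n Iplus μ ∧ lam ≤ μ}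
  have hS : InfClosed S := fun μ hμ ν hν ↦ ⟨hμ.1.inf hν.1, le_inf hμ.2 hν.2⟩
  obtain ⟨π, hπ⟩ := exists_minimal_of_wellFoundedLT (· ∈ S) (exists_isGenerated_le hne lam)
  have hleast : IsLeast S π := hS.codirectedOn.minimal_iff_isLeast.mp hπ
  refine ⟨π, ⟨hleast.1.1, hleast.1.2, fun μ hμ hle ↦ hleast.2 ⟨hμ, hle⟩⟩, ?_⟩
  rintro π' ⟨hgen, hle, hmin⟩
  exact le_antisymm (hmin π hleast.1.1 hleast.1.2) (hleast.2 ⟨hgen, hle⟩)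
end

section
/- Consider the Fock space 𝔽 with basis vectors |Y⟩ indexed by partitions Y, and for each c ∈ ℤ the operators E_c |Y⟩ = Σ |Y \ {s}⟩ over removable boxes s of Y with content c, and F_c |Y⟩ = Σ |Y ∪ {s}⟩ over addable boxes s with content c. Then for all c, c' ∈ ℤ with c ≠ c', the operators E_c and F_{c'} commute: [E_c, F_{c'}] = 0. -/
open scoped Classical

/-- Fermionic Fock space: the vector space with basis indexed by partitions
(Young diagrams). -/
abbrev Fock : Type := YoungDiagram →₀ ℂ

/-- The content of the box `(i,j)` (row `i`, column `j`) is `j - i`. -/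
def content (b : ℕ × ℕ) : ℤ := (b.2 : ℤ) - (b.1 : ℤ)

/-- Remove a cell from a Young diagram (returning `μ` unchanged if the result
would not be a Young diagram). -/
noncomputable def eraseCell (μ : YoungDiagram) (s : ℕ × ℕ) : YoungDiagram :=
  if h : IsLowerSet ((μ.cells.erase s : Finset (ℕ × ℕ)) : Set (ℕ × ℕ)) then
    ⟨μ.cells.erase s, h⟩ else μ

/-- Add a cell to a Young diagram (returning `μ` unchanged if the result
would not be a Young diagram). -/
noncomputable def addCell (μ : YoungDiagram) (b : ℕ × ℕ) : YoungDiagram :=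
  if h : IsLowerSet ((insert b μ.cells : Finset (ℕ × ℕ)) : Set (ℕ × ℕ)) then
    ⟨insert b μ.cells, h⟩ else μ

/-- The removable boxes of `μ` of content `c`. -/
def removables (c : ℤ) (μ : YoungDiagram) : Finset (ℕ × ℕ) :=
  μ.cells.filter
    (fun s => (s.1 + 1, s.2) ∉ μ.cells ∧ (s.1, s.2 + 1) ∉ μ.cells ∧ content s = c)

/-- The addable boxes of `μ` of content `c`. -/
def addables (c : ℤ) (μ : YoungDiagram) : Finset (ℕ × ℕ) :=
  ((Finset.range (μ.colLen 0 + 1)) ×ˢ (Finset.range (μ.rowLen 0 + 1))).filter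
    (fun b => b ∉ μ.cells ∧ (∀ i ∈ Finset.range b.1, (i, b.2) ∈ μ.cells) ∧
      (∀ j ∈ Finset.range b.2, (b.1, j) ∈ μ.cells) ∧ content b = c)

/-- `E_c |Y⟩ = Σ |Y \ {s}⟩`, sum over removable boxes `s` of `Y` of content `c`. -/
noncomputable def Eop (c : ℤ) : Fock →ₗ[ℂ] Fock :=
  Finsupp.lsum ℂ (fun μ => LinearMap.toSpanSingleton ℂ Fock
    (∑ s ∈ removables c μ, Finsupp.single (eraseCell μ s) (1 : ℂ)))

/-- `F_c |Y⟩ = Σ |Y ∪ {s}⟩`, sum over addable boxes `s` of `Y` of content `c`. -/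
noncomputable def Fop (c : ℤ) : Fock →ₗ[ℂ] Fock :=
  Finsupp.lsum ℂ (fun μ => LinearMap.toSpanSingleton ℂ Fock
    (∑ b ∈ addables c μ, Finsupp.single (addCell μ b) (1 : ℂ)))

/-- `h_c(Y)`: number of addable boxes of content `c` minus number of removable
boxes of content `c`. -/
def hdiff (c : ℤ) (μ : YoungDiagram) : ℤ :=
  ((addables c μ).card : ℤ) - ((removables c μ).card : ℤ)

/-- `H_c |Y⟩ = h_c(Y) |Y⟩`. -/
noncomputable def Hop (c : ℤ) : Fock →ₗ[ℂ] Fock :=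
  Finsupp.lsum ℂ (fun μ => LinearMap.toSpanSingleton ℂ Fock
    ((hdiff c μ : ℂ) • Finsupp.single μ (1 : ℂ)))

/-- `wt_c(Y)`: the number of boxes of `Y` of content `c`. -/
def wt (c : ℤ) (μ : YoungDiagram) : ℕ :=
  (μ.cells.filter (fun s => content s = c)).card

/-- `D_c |Y⟩ = wt_c(Y) |Y⟩`. -/
noncomputable def Dop (c : ℤ) : Fock →ₗ[ℂ] Fock :=
  Finsupp.lsum ℂ (fun μ => LinearMap.toSpanSingleton ℂ Fock
    ((wt c μ : ℂ) • Finsupp.single μ (1 : ℂ)))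

/-!
Both `E_c F_{c'} |Y⟩` and `F_{c'} E_c |Y⟩` are sums over pairs of a box `b` of content `c'` to
be added and a box `s` of content `c` to be removed. As the contents differ, `s ≠ b`, and then
adding `b` and removing `s` do not interfere: `s` is removable from `Y ∪ {b}` iff it is removable
from `Y` and `b` is addable to `Y \ {s}`, because a box below or right of `s` lying weakly above
and left of `b` would block one of the two moves. Both orders give the same diagram, so the two
sums agree term by term.
-/

section Cells

open YoungDiagram

variable {μ : YoungDiagram} {c c' : ℤ} {s b x : ℕ × ℕ}

lemma mem_removables :
    s ∈ removables c μ ↔ s ∈ μ ∧ (s.1 + 1, s.2) ∉ μ ∧ (s.1, s.2 + 1) ∉ μ ∧ content s = c := by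
  simp [removables]

lemma lt_of_forall_mem_above_left (hcol : ∀ i < b.1, (i, b.2) ∈ μ)
    (hrow : ∀ j < b.2, (b.1, j) ∈ μ) : b.1 < μ.colLen 0 + 1 ∧ b.2 < μ.rowLen 0 + 1 := by
  constructor
  · rcases Nat.eq_zero_or_pos b.1 with h0 | h0
    · omega
    · have := μ.up_left_mem le_rfl (Nat.zero_le _) (hcol (b.1 - 1) (by omega))
      rw [mem_iff_lt_colLen] at this
      omega
  · rcases Nat.eq_zero_or_pos b.2 with h0 | h0
    · omega
    · have := μ.up_left_mem (Nat.zero_le _) le_rfl (hrow (b.2 - 1) (by omega))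
      rw [mem_iff_lt_rowLen] at this
      omega

lemma mem_addables :
    b ∈ addables c μ ↔
      b ∉ μ ∧ (∀ i < b.1, (i, b.2) ∈ μ) ∧ (∀ j < b.2, (b.1, j) ∈ μ) ∧ content b = c := by
  simp only [addables, Finset.mem_filter, Finset.mem_product, Finset.mem_range, mem_cells]
  constructor
  · exact fun h => h.2
  · exact fun h => ⟨lt_of_forall_mem_above_left h.2.1 h.2.2.1, h⟩

lemma mem_eraseCell (hdown : (s.1 + 1, s.2) ∉ μ) (hright : (s.1, s.2 + 1) ∉ μ) :
    x ∈ eraseCell μ s ↔ x ≠ s ∧ x ∈ μ := by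
  have hlower : IsLowerSet ((μ.cells.erase s : Finset (ℕ × ℕ)) : Set (ℕ × ℕ)) := by
    rintro y x hxy hy
    simp only [Finset.coe_erase, Set.mem_sdiff, Finset.mem_coe, mem_cells,
      Set.mem_singleton_iff] at hy ⊢
    refine ⟨μ.isLowerSet hxy hy.1, ?_⟩
    rintro rfl
    obtain ⟨h1, h2⟩ := Prod.mk_le_mk.mp hxy
    rcases h1.lt_or_eq with h1 | h1
    · exact hdown (μ.up_left_mem h1 h2 hy.1)
    rcases h2.lt_or_eq with h2 | h2
    · exact hright (μ.up_left_mem h1.le h2 hy.1)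
    · exact hy.2 (Prod.ext h1.symm h2.symm)
  rw [eraseCell, dif_pos hlower, mem_mk, Finset.mem_erase, mem_cells]

lemma mem_addCell (hcol : ∀ i < b.1, (i, b.2) ∈ μ) (hrow : ∀ j < b.2, (b.1, j) ∈ μ) :
    x ∈ addCell μ b ↔ x = b ∨ x ∈ μ := by
  have hlower : IsLowerSet ((insert b μ.cells : Finset (ℕ × ℕ)) : Set (ℕ × ℕ)) := by
    rintro y x hxy hy
    simp only [Finset.coe_insert, Set.mem_insert_iff, Finset.mem_coe, mem_cells] at hy ⊢
    rcases hy with rfl | hy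
    · obtain ⟨h1, h2⟩ := Prod.mk_le_mk.mp hxy
      rcases h1.lt_or_eq with h1 | h1
      · exact Or.inr (μ.up_left_mem le_rfl h2 (hcol x.1 h1))
      rcases h2.lt_or_eq with h2 | h2
      · have hx := hrow x.2 h2
        rw [← h1] at hx
        exact Or.inr hx
      · exact Or.inl (Prod.ext h1 h2)
    · exact Or.inr (μ.isLowerSet hxy hy)
  rw [addCell, dif_pos hlower, mem_mk, Finset.mem_insert, mem_cells]

lemma ne_of_mem_removables_of_mem_addables {ν : YoungDiagram} (h : c ≠ c')
    (hs : s ∈ removables c μ) (hb : b ∈ addables c' ν) : s ≠ b :=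
  ne_of_apply_ne content <| by
    rw [(mem_removables.mp hs).2.2.2, (mem_addables.mp hb).2.2.2]
    exact h

lemma removable_addable_swap (hsb : s ≠ b) (hb : b ∈ addables c' μ)
    (hs : s ∈ removables c (addCell μ b)) :
    s ∈ removables c μ ∧ b ∈ addables c' (eraseCell μ s) := by
  obtain ⟨hbμ, hcol, hrow, hbc⟩ := mem_addables.mp hb
  obtain ⟨hsμ, hdown, hright, hsc⟩ := mem_removables.mp hs
  have hmem : ∀ {x}, x ∈ addCell μ b ↔ x = b ∨ x ∈ μ := mem_addCell hcol hrow
  have hdown' : (s.1 + 1, s.2) ∉ μ := fun h => hdown (hmem.mpr (Or.inr h))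
  have hright' : (s.1, s.2 + 1) ∉ μ := fun h => hright (hmem.mpr (Or.inr h))
  refine ⟨mem_removables.mpr ⟨(hmem.mp hsμ).resolve_left hsb, hdown', hright', hsc⟩, ?_⟩
  have hbmem : (b.1, b.2) ∈ addCell μ b := hmem.mpr (Or.inl rfl)
  simp only [mem_addables, mem_eraseCell hdown' hright']
  refine ⟨fun h => hbμ h.2, fun i hi => ⟨?_, hcol i hi⟩, fun j hj => ⟨?_, hrow j hj⟩, hbc⟩
  · rintro rfl
    exact hdown ((addCell μ b).up_left_mem hi le_rfl hbmem)
  · rintro rfl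
    exact hright ((addCell μ b).up_left_mem le_rfl hj hbmem)

lemma addable_removable_swap (hsb : s ≠ b) (hs : s ∈ removables c μ)
    (hb : b ∈ addables c' (eraseCell μ s)) :
    b ∈ addables c' μ ∧ s ∈ removables c (addCell μ b) := by
  obtain ⟨hsμ, hdown, hright, hsc⟩ := mem_removables.mp hs
  obtain ⟨hbμ, hcol, hrow, hbc⟩ := mem_addables.mp hb
  simp only [mem_eraseCell hdown hright] at hbμ hcol hrow
  have hcol' : ∀ i < b.1, (i, b.2) ∈ μ := fun i hi => (hcol i hi).2
  have hrow' : ∀ j < b.2, (b.1, j) ∈ μ := fun j hj => (hrow j hj).2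
  refine ⟨mem_addables.mpr ⟨fun h => hbμ ⟨hsb.symm, h⟩, hcol', hrow', hbc⟩, ?_⟩
  simp only [mem_removables, mem_addCell hcol' hrow']
  refine ⟨Or.inr hsμ, ?_, ?_, hsc⟩
  · rintro (rfl | h)
    · exact (hcol s.1 s.1.lt_succ_self).1 rfl
    · exact hdown h
  · rintro (rfl | h)
    · exact (hrow s.2 s.2.lt_succ_self).1 rfl
    · exact hright h

lemma eraseCell_addCell_comm (hsb : s ≠ b) (hb : b ∈ addables c' μ)
    (hs : s ∈ removables c (addCell μ b)) :
    eraseCell (addCell μ b) s = addCell (eraseCell μ s) b := by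
  obtain ⟨hs', hb'⟩ := removable_addable_swap hsb hb hs
  obtain ⟨-, hcol, hrow, -⟩ := mem_addables.mp hb
  obtain ⟨-, hcol', hrow', -⟩ := mem_addables.mp hb'
  obtain ⟨-, hdown, hright, -⟩ := mem_removables.mp hs
  obtain ⟨-, hdown', hright', -⟩ := mem_removables.mp hs'
  ext x
  simp only [mem_cells, mem_eraseCell hdown hright, mem_addCell hcol hrow, mem_addCell hcol' hrow',
    mem_eraseCell hdown' hright']
  grind

end Cells

lemma Eop_single (c : ℤ) (μ : YoungDiagram) :
    Eop c (Finsupp.single μ 1) = ∑ s ∈ removables c μ, Finsupp.single (eraseCell μ s) 1 := by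
  rw [Eop, Finsupp.lsum_single, LinearMap.toSpanSingleton_apply, one_smul]

lemma Fop_single (c : ℤ) (μ : YoungDiagram) :
    Fop c (Finsupp.single μ 1) = ∑ b ∈ addables c μ, Finsupp.single (addCell μ b) 1 := by
  rw [Fop, Finsupp.lsum_single, LinearMap.toSpanSingleton_apply, one_smul]

/-- For `c ≠ c'`, the Fock space operators `E_c` and `F_{c'}` commute:
`[E_c, F_{c'}] = 0`. -/
theorem E_F_commute (c c' : ℤ) (h : c ≠ c') :
    (Eop c).comp (Fop c') - (Fop c').comp (Eop c) = 0 := by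
  refine sub_eq_zero.mpr <| Finsupp.lhom_ext' fun μ => LinearMap.ext_ring ?_
  simp only [LinearMap.comp_apply, Finsupp.lsingle_apply, Fop_single, Eop_single, map_sum]
  rw [Finset.sum_sigma', Finset.sum_sigma']
  refine Finset.sum_nbij' (fun p => ⟨p.2, p.1⟩) (fun p => ⟨p.2, p.1⟩) ?_ ?_
    (fun _ _ => rfl) (fun _ _ => rfl) ?_
  · rintro ⟨b, s⟩ hp
    obtain ⟨hb, hs⟩ := Finset.mem_sigma.mp hp
    exact Finset.mem_sigma.mpr
      (removable_addable_swap (ne_of_mem_removables_of_mem_addables h hs hb) hb hs)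
  · rintro ⟨s, b⟩ hp
    obtain ⟨hs, hb⟩ := Finset.mem_sigma.mp hp
    exact Finset.mem_sigma.mpr
      (addable_removable_swap (ne_of_mem_removables_of_mem_addables h hs hb) hs hb)
  · rintro ⟨b, s⟩ hp
    obtain ⟨hb, hs⟩ := Finset.mem_sigma.mp hp
    rw [eraseCell_addCell_comm (ne_of_mem_removables_of_mem_addables h hs hb) hb hs]
end
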